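/- Let Q be an irreducible totally stable, conservative, upward skip-free Q-matrix on ℕ and c : ℕ → [0,∞) a finite nonnegative function. Then the potential satisfies ψ(i) = ∑_{m=i}^∞ ∑_{k=0}^{m} F̃_m^{(k)}·c(k)/Q(k,k+1) for every i (equality in [0,∞]); moreover ψ(i) < ∞ for all i if and only if ψ(0) < ∞. -/

import Mathlib

open scoped ENNReal
open Filter Topology

/-- Matrix powers of a nonnegative kernel on ℕ, values in `[0,∞]`. -/
noncomputable def matPow (P : ℕ → ℕ → ℝ≥0∞) : ℕ → ℕ → ℕ → ℝ≥0∞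
  | 0, i, j => if i = j then 1 else 0
  | k + 1, i, j => ∑' l : ℕ, matPow P k i l * P l j

/-- A totally stable, conservative Q-matrix on ℕ: nonnegative off-diagonal entries,
finite negative diagonal entries, and rows summing to zero. -/
structure IsQMatrix (Q : ℕ → ℕ → ℝ) : Prop where
  offdiag_nonneg : ∀ i j : ℕ, i ≠ j → 0 ≤ Q i j
  diag_neg : ∀ i : ℕ, Q i i < 0
  row_sum_zero : ∀ i : ℕ, HasSum (Q i) 0

/-- The jump matrix `P_Q(i,j) = -Q(i,j)/Q(i,i)` for `j ≠ i`, `P_Q(i,i) = 0`. -/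
noncomputable def jumpMatrix (Q : ℕ → ℕ → ℝ) : ℕ → ℕ → ℝ≥0∞ := fun i j =>
  if j = i then 0 else ENNReal.ofReal (-(Q i j) / Q i i)

/-- `c_Q(i) = -c(i)/Q(i,i)`. -/
noncomputable def cQ (Q : ℕ → ℕ → ℝ) (c : ℕ → ℝ) : ℕ → ℝ≥0∞ := fun i =>
  ENNReal.ofReal (-(c i) / Q i i)

/-- Irreducibility of a Q-matrix: its jump matrix is irreducible. -/
def QIrreducible (Q : ℕ → ℕ → ℝ) : Prop :=
  ∀ i j : ℕ, ∃ k : ℕ, 0 < matPow (jumpMatrix Q) k i j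

/-- The potential `ψ(i) = ∑_{k=0}^∞ ∑_j P_Q^k(i,j) c_Q(j)` of the CTMC with
Q-matrix `Q` and cost `c`; it is the minimal nonnegative solution of `-Qψ = c`. -/
noncomputable def ctPotential (Q : ℕ → ℕ → ℝ) (c : ℕ → ℝ) (i : ℕ) : ℝ≥0∞ :=
  ∑' k : ℕ, ∑' j : ℕ, matPow (jumpMatrix Q) k i j * cQ Q c j

/-- Upward skip-free Q-matrix: `Q(i,i+1) > 0` and `Q(i,k) = 0` for `k ≥ i+2`. -/
def QUpwardSkipFree (Q : ℕ → ℕ → ℝ) : Prop :=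
  (∀ i : ℕ, 0 < Q i (i + 1)) ∧ ∀ i k : ℕ, i + 2 ≤ k → Q i k = 0

/-- `Q_n^{(k-)} = ∑_{i=0}^k Q(n,i)`. -/
noncomputable def Qminus (Q : ℕ → ℕ → ℝ) (n k : ℕ) : ℝ :=
  ∑ l ∈ Finset.range (k + 1), Q n l

/-- `Ftilde Q i n = F̃_n^{(i)}`: `F̃_i^{(i)} = 1` and
`F̃_n^{(i)} = (1/Q(n,n+1)) ∑_{k=i}^{n-1} Q_n^{(k-)} F̃_k^{(i)}` for `i < n`. -/
noncomputable def Ftilde (Q : ℕ → ℕ → ℝ) (i : ℕ) : ℕ → ℝ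
  | n =>
    if n ≤ i then 1
    else (Q n (n + 1))⁻¹ *
      ∑ k ∈ (Finset.Ico i n).attach, Qminus Q n k.1 * Ftilde Q i k.1
  termination_by n => n
  decreasing_by
    have h := Finset.mem_Ico.mp k.2
    omega

/-!
By upward skip-freeness, row `n` of `-Qv = c` involves only `v(0), …, v(n+1)`, and since these
entries of the row sum to `0`, summation by parts turns it into
`∑_{l < n} Q_n^{(l-)} (v(l) - v(l+1)) - Q(n,n+1) (v(n) - v(n+1)) = -c(n)`.
Inductively, a real `v` solves `-Qv = c` iff `v(n) - v(n+1) = e(n)` for all `n`, where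
`e(n) = ∑_{k ≤ n} F̃_n^{(k)} c(k)/Q(k,k+1)`: the recursion defining `F̃` is the one these drops
satisfy. A nonnegative such `v` dominates the tail sum `T(i) = ∑_{m ≥ i} e(m)`, and a finite `T`
is itself a solution. As `ψ` is the minimal nonnegative solution, `ψ = T` whenever either of them
is finite everywhere. Otherwise both are infinite everywhere: `ψ(j) ≥ P_Q^k(j,i) ψ(i)` with
`P_Q^k(j,i) > 0` by irreducibility, and consecutive values of `T` differ by the finite `e(n)`.
-/

open Finset

section KernelPotential

variable (P : ℕ → ℕ → ℝ≥0∞)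

noncomputable def kernelPotential (f : ℕ → ℝ≥0∞) (i : ℕ) : ℝ≥0∞ :=
  ∑' k, ∑' j, matPow P k i j * f j

lemma tsum_matPow_zero_mul (f : ℕ → ℝ≥0∞) (i : ℕ) : ∑' j, matPow P 0 i j * f j = f i := by
  rw [tsum_eq_single i fun j hj => by simp [matPow, Ne.symm hj]]
  simp [matPow]

lemma matPow_succ' (k : ℕ) : ∀ i j, matPow P (k + 1) i j = ∑' l, P i l * matPow P k l j := by
  induction k with
  | zero =>
    intro i j
    rw [matPow, tsum_eq_single i fun l hl => by simp [matPow, Ne.symm hl],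
      tsum_eq_single j fun l hl => by simp [matPow, hl]]
    simp [matPow]
  | succ k ih =>
    intro i j
    calc matPow P (k + 2) i j = ∑' m, ∑' l, P i l * (matPow P k l m * P m j) := by
          simp only [matPow] at ih ⊢
          simp_rw [ih, ← ENNReal.tsum_mul_right, mul_assoc]
      _ = ∑' l, P i l * matPow P (k + 1) l j := by
          rw [ENNReal.tsum_comm]
          simp_rw [ENNReal.tsum_mul_left, matPow]

lemma tsum_matPow_succ_mul (f : ℕ → ℝ≥0∞) (k i : ℕ) :
    ∑' j, matPow P (k + 1) i j * f j = ∑' l, P i l * ∑' j, matPow P k l j * f j := by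
  calc ∑' j, matPow P (k + 1) i j * f j = ∑' j, ∑' l, P i l * (matPow P k l j * f j) := by
        simp_rw [matPow_succ', ← ENNReal.tsum_mul_right, mul_assoc]
    _ = ∑' l, P i l * ∑' j, matPow P k l j * f j := by
        rw [ENNReal.tsum_comm]
        simp_rw [ENNReal.tsum_mul_left]

lemma kernelPotential_eq (f : ℕ → ℝ≥0∞) (i : ℕ) :
    kernelPotential P f i = f i + ∑' j, P i j * kernelPotential P f j := by
  rw [kernelPotential, tsum_eq_zero_add' ENNReal.summable, tsum_matPow_zero_mul]
  simp_rw [tsum_matPow_succ_mul, kernelPotential, ← ENNReal.tsum_mul_left]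
  rw [ENNReal.tsum_comm]

lemma sum_range_add_tsum_matPow_le {f φ : ℕ → ℝ≥0∞}
    (hφ : ∀ i, f i + ∑' j, P i j * φ j ≤ φ i) (n : ℕ) : ∀ i,
    ∑ k ∈ range n, ∑' j, matPow P k i j * f j + ∑' j, matPow P n i j * φ j ≤ φ i := by
  induction n with
  | zero => simp [tsum_matPow_zero_mul]
  | succ n ih =>
    intro i
    calc ∑ k ∈ range (n + 1), ∑' j, matPow P k i j * f j + ∑' j, matPow P (n + 1) i j * φ j
        = f i + ∑' l, P i l * (∑ k ∈ range n, ∑' j, matPow P k l j * f j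
            + ∑' j, matPow P n l j * φ j) := by
          simp_rw [sum_range_succ', tsum_matPow_zero_mul, tsum_matPow_succ_mul, mul_add,
            ENNReal.tsum_add, mul_sum, ← Summable.tsum_finsetSum fun _ _ => ENNReal.summable]
          ring
      _ ≤ f i + ∑' l, P i l * φ l := by gcongr with l; exact ih l
      _ ≤ φ i := hφ i

lemma kernelPotential_le {f φ : ℕ → ℝ≥0∞} (hφ : ∀ i, f i + ∑' j, P i j * φ j ≤ φ i) (i : ℕ) :
    kernelPotential P f i ≤ φ i := by
  rw [kernelPotential, ENNReal.tsum_eq_iSup_nat]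
  exact iSup_le fun n => le_self_add.trans (sum_range_add_tsum_matPow_le P hφ n i)

lemma kernelPotential_ne_top_of_matPow_pos {f : ℕ → ℝ≥0∞} {k a b : ℕ}
    (hk : 0 < matPow P k a b) (ha : kernelPotential P f a ≠ ⊤) : kernelPotential P f b ≠ ⊤ := by
  have hle : matPow P k a b * kernelPotential P f b ≤ kernelPotential P f a :=
    (ENNReal.le_tsum b).trans <| le_add_self.trans <|
      sum_range_add_tsum_matPow_le P (fun i => (kernelPotential_eq P f i).ge) k a
  contrapose! ha
  rwa [ha, ENNReal.mul_top hk.ne', top_le_iff] at hle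

end KernelPotential

lemma tsum_subtype_le_eq_tsum_add {α : Type*} [AddCommMonoid α] [TopologicalSpace α]
    (f : ℕ → α) (i : ℕ) : ∑' m : {m : ℕ // i ≤ m}, f m = ∑' n, f (i + n) :=
  ((Equiv.ofBijective (fun n => (⟨i + n, Nat.le_add_right i n⟩ : {m : ℕ // i ≤ m}))
    ⟨fun a b h => by simpa using h,
      fun m => ⟨m.1 - i, Subtype.ext (Nat.add_sub_cancel' m.2)⟩⟩).tsum_eq
    (fun m => f m)).symm

lemma tsum_add_eq_add_tsum_succ (a : ℕ → ℝ≥0∞) (i : ℕ) :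
    ∑' n, a (i + n) = a i + ∑' n, a (i + 1 + n) := by
  rw [tsum_eq_zero_add' ENNReal.summable]
  simp_rw [add_zero, add_assoc, add_comm 1]

section Tail

variable {a v : ℕ → ℝ≥0∞}

lemma sum_range_add_eq_of_eq_add_succ (hv : ∀ n, v n = a n + v (n + 1)) (i N : ℕ) :
    ∑ n ∈ range N, a (i + n) + v (i + N) = v i := by
  induction N with
  | zero => simp
  | succ N ih => rw [sum_range_succ, add_assoc, ← add_assoc i, ← hv, ih]

lemma tsum_add_le_of_eq_add_succ (hv : ∀ n, v n = a n + v (n + 1)) (i : ℕ) :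
    ∑' n, a (i + n) ≤ v i :=
  ENNReal.tsum_le_of_sum_range_le fun N =>
    le_self_add.trans (sum_range_add_eq_of_eq_add_succ hv i N).le

lemma ne_top_iff_of_eq_add_succ (ha : ∀ n, a n ≠ ⊤) (hv : ∀ n, v n = a n + v (n + 1)) (n : ℕ) :
    v n ≠ ⊤ ↔ v 0 ≠ ⊤ := by
  induction n with
  | zero => rfl
  | succ n ih => rw [← ih, hv n, ENNReal.add_ne_top, and_iff_right (ha n)]

end Tail

section SkipFree

variable {Q : ℕ → ℕ → ℝ} {c : ℕ → ℝ}

lemma sum_range_row_eq_zero (hQ : IsQMatrix Q) (hup : QUpwardSkipFree Q) (n : ℕ) :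
    ∑ j ∈ range (n + 2), Q n j = 0 :=
  (hasSum_sum_of_ne_finset_zero fun j hj => hup.2 n j (by simpa using hj)).unique
    (hQ.row_sum_zero n)

lemma Qminus_self (hQ : IsQMatrix Q) (hup : QUpwardSkipFree Q) (n : ℕ) :
    Qminus Q n n = -Q n (n + 1) := by
  rw [Qminus, eq_neg_iff_add_eq_zero, ← sum_range_succ, sum_range_row_eq_zero hQ hup]

lemma Qminus_nonneg (hQ : IsQMatrix Q) {n l : ℕ} (h : l < n) : 0 ≤ Qminus Q n l :=
  sum_nonneg fun j hj => hQ.offdiag_nonneg n j (by simp at hj; omega)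

lemma Ftilde_of_le {i n : ℕ} (h : n ≤ i) : Ftilde Q i n = 1 := by
  rw [Ftilde, if_pos h]

lemma mul_Ftilde {i n : ℕ} (hn : Q n (n + 1) ≠ 0) (h : i < n) :
    Q n (n + 1) * Ftilde Q i n = ∑ k ∈ Ico i n, Qminus Q n k * Ftilde Q i k := by
  rw [Ftilde, if_neg (by omega), mul_inv_cancel_left₀ hn]
  exact sum_attach (Ico i n) fun k => Qminus Q n k * Ftilde Q i k

lemma Ftilde_nonneg (hQ : IsQMatrix Q) (hup : QUpwardSkipFree Q) (i n : ℕ) :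
    0 ≤ Ftilde Q i n := by
  induction n using Nat.strong_induction_on with
  | _ n ih =>
    rcases le_or_gt n i with h | h
    · rw [Ftilde_of_le h]; exact zero_le_one
    · have hrec := mul_Ftilde (hup.1 n).ne' h
      refine nonneg_of_mul_nonneg_right (hrec ▸ sum_nonneg fun k hk => ?_) (hup.1 n)
      have hk := (mem_Ico.mp hk).2
      exact mul_nonneg (Qminus_nonneg hQ hk) (ih k hk)

noncomputable def potentialDrop (Q : ℕ → ℕ → ℝ) (c : ℕ → ℝ) (m : ℕ) : ℝ :=
  ∑ k ∈ range (m + 1), Ftilde Q k m * c k / Q k (k + 1)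

lemma potentialDrop_nonneg (hQ : IsQMatrix Q) (hup : QUpwardSkipFree Q) (hc : ∀ i, 0 ≤ c i)
    (m : ℕ) : 0 ≤ potentialDrop Q c m :=
  sum_nonneg fun k _ => div_nonneg (mul_nonneg (Ftilde_nonneg hQ hup k m) (hc k)) (hup.1 k).le

lemma ofReal_potentialDrop (hQ : IsQMatrix Q) (hup : QUpwardSkipFree Q) (hc : ∀ i, 0 ≤ c i)
    (m : ℕ) : ENNReal.ofReal (potentialDrop Q c m)
      = ∑ k ∈ range (m + 1), ENNReal.ofReal (Ftilde Q k m * c k / Q k (k + 1)) :=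
  ENNReal.ofReal_sum_of_nonneg fun k _ =>
    div_nonneg (mul_nonneg (Ftilde_nonneg hQ hup k m) (hc k)) (hup.1 k).le

lemma mul_potentialDrop (hQ1 : ∀ k, Q k (k + 1) ≠ 0) (n : ℕ) :
    Q n (n + 1) * potentialDrop Q c n
      = c n + ∑ l ∈ range n, Qminus Q n l * potentialDrop Q c l := by
  have hswap : ∑ l ∈ range n, Qminus Q n l * potentialDrop Q c l
      = ∑ k ∈ range n, Q n (n + 1) * (Ftilde Q k n * c k / Q k (k + 1)) := by
    calc ∑ l ∈ range n, Qminus Q n l * potentialDrop Q c l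
        = ∑ k ∈ range n, ∑ l ∈ Ico k n, Qminus Q n l * (Ftilde Q k l * c k / Q k (k + 1)) := by
          simp_rw [potentialDrop, mul_sum]
          exact sum_comm' fun l k => by simp only [mem_range, mem_Ico]; omega
      _ = ∑ k ∈ range n, (∑ l ∈ Ico k n, Qminus Q n l * Ftilde Q k l) * (c k / Q k (k + 1)) := by
          simp_rw [sum_mul, mul_div_assoc, mul_assoc]
      _ = ∑ k ∈ range n, Q n (n + 1) * (Ftilde Q k n * c k / Q k (k + 1)) := by
          refine sum_congr rfl fun k hk => ?_
          rw [← mul_Ftilde (hQ1 n) (mem_range.mp hk)]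
          ring
  rw [hswap, potentialDrop, mul_sum, sum_range_succ, Ftilde_of_le le_rfl, one_mul,
    mul_div_cancel₀ _ (hQ1 n), add_comm]

lemma sum_mul_eq_sum_Qminus_mul_sub (hQ : IsQMatrix Q) (hup : QUpwardSkipFree Q)
    (v : ℕ → ℝ) (n : ℕ) :
    ∑ j ∈ range (n + 2), Q n j * v j = ∑ l ∈ range (n + 1), Qminus Q n l * (v l - v (l + 1)) := by
  have := sum_range_by_parts v (Q n) (n + 2)
  simp only [smul_eq_mul, sum_range_row_eq_zero hQ hup, mul_zero, zero_sub] at this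
  rw [sum_congr rfl fun j _ => mul_comm (Q n j) (v j), this, ← sum_neg_distrib]
  exact sum_congr rfl fun l _ => by rw [Qminus]; ring

lemma row_eq_iff_sub_succ_eq (hQ : IsQMatrix Q) (hup : QUpwardSkipFree Q) (v : ℕ → ℝ) (n : ℕ)
    (h : ∀ l < n, v l - v (l + 1) = potentialDrop Q c l) :
    ∑ j ∈ range (n + 2), Q n j * v j = -c n ↔ v n - v (n + 1) = potentialDrop Q c n := by
  have hdrop := mul_potentialDrop (c := c) (fun k => (hup.1 k).ne') n
  rw [sum_mul_eq_sum_Qminus_mul_sub hQ hup, sum_range_succ, Qminus_self hQ hup,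
    sum_congr rfl fun l hl => by rw [h l (mem_range.mp hl)]]
  constructor
  · intro hrow
    exact mul_left_cancel₀ (hup.1 n).ne' (by linarith)
  · intro hdiff
    rw [hdiff]
    linarith

lemma row_eq_iff_forall_sub_succ_eq (hQ : IsQMatrix Q) (hup : QUpwardSkipFree Q) (v : ℕ → ℝ) :
    (∀ n, ∑ j ∈ range (n + 2), Q n j * v j = -c n)
      ↔ ∀ n, v n - v (n + 1) = potentialDrop Q c n := by
  refine ⟨fun hrow n => ?_, fun hdiff n => ?_⟩
  · induction n using Nat.strong_induction_on with
    | _ n ih => exact (row_eq_iff_sub_succ_eq hQ hup v n ih).1 (hrow n)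
  · exact (row_eq_iff_sub_succ_eq hQ hup v n fun l _ => hdiff l).2 (hdiff n)

end SkipFree

section Bridge

variable {Q : ℕ → ℕ → ℝ} {c : ℕ → ℝ}

lemma jumpMatrix_eq_ofReal (Q : ℕ → ℕ → ℝ) (n j : ℕ) :
    jumpMatrix Q n j = ENNReal.ofReal (if j = n then 0 else -Q n j / Q n n) := by
  unfold jumpMatrix; split_ifs <;> simp

lemma cQ_add_tsum_jumpMatrix_eq_ofReal_iff (hQ : IsQMatrix Q) (hup : QUpwardSkipFree Q)
    (hc : ∀ i, 0 ≤ c i) {v : ℕ → ℝ} (hv : ∀ j, 0 ≤ v j) (n : ℕ) :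
    cQ Q c n + ∑' j, jumpMatrix Q n j * ENNReal.ofReal (v j) = ENNReal.ofReal (v n)
      ↔ ∑ j ∈ range (n + 2), Q n j * v j = -c n := by
  set p : ℕ → ℝ := fun j => if j = n then 0 else -Q n j / Q n n
  have hQn := (hQ.diag_neg n).ne
  have hp : ∀ j, 0 ≤ p j := fun j => by
    dsimp only [p]
    split_ifs with h
    · exact le_rfl
    · exact div_nonneg_of_nonpos (neg_nonpos.2 (hQ.offdiag_nonneg n j (Ne.symm h)))
        (hQ.diag_neg n).le
  have hpv : ∀ j, 0 ≤ p j * v j := fun j => mul_nonneg (hp j) (hv j)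
  have hcn : 0 ≤ -c n / Q n n := div_nonneg_of_nonpos (neg_nonpos.2 (hc n)) (hQ.diag_neg n).le
  have hterm : ∀ j, jumpMatrix Q n j * ENNReal.ofReal (v j) = ENNReal.ofReal (p j * v j) :=
    fun j => by rw [jumpMatrix_eq_ofReal, ENNReal.ofReal_mul (hp j)]
  have hsupp : ∀ j ∉ range (n + 2), ENNReal.ofReal (p j * v j) = 0 := fun j hj => by
    simp only [mem_range, not_lt] at hj
    simp [p, show j ≠ n by omega, hup.2 n j hj]
  have hsum : ∑ j ∈ range (n + 2), p j * v j
      = v n - (∑ j ∈ range (n + 2), Q n j * v j) / Q n n := by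
    rw [eq_sub_iff_add_eq, sum_div, ← sum_add_distrib,
      ← sum_ite_eq_of_mem' (range (n + 2)) n v (by simp)]
    refine sum_congr rfl fun j _ => ?_
    dsimp only [p]
    split_ifs with h
    · subst h; field_simp; ring
    · field_simp; ring
  simp_rw [hterm]
  rw [tsum_eq_sum hsupp, cQ, ← ENNReal.ofReal_sum_of_nonneg fun j _ => hpv j,
    ← ENNReal.ofReal_add hcn (sum_nonneg fun j _ => hpv j),
    ENNReal.ofReal_eq_ofReal_iff (add_nonneg hcn (sum_nonneg fun j _ => hpv j)) (hv n), hsum]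
  constructor
  · intro h
    field_simp at h
    linarith
  · intro h
    rw [h]
    ring

end Bridge

section Potential

variable {Q : ℕ → ℕ → ℝ} {c : ℕ → ℝ}

lemma ctPotential_eq_kernelPotential (Q : ℕ → ℕ → ℝ) (c : ℕ → ℝ) :
    ctPotential Q c = kernelPotential (jumpMatrix Q) (cQ Q c) := rfl

lemma fixedPoint_iff_eq_potentialDrop_add (hQ : IsQMatrix Q) (hup : QUpwardSkipFree Q)
    (hc : ∀ i, 0 ≤ c i) {v : ℕ → ℝ≥0∞} (hv : ∀ n, v n ≠ ⊤) :
    (∀ n, cQ Q c n + ∑' j, jumpMatrix Q n j * v j = v n)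
      ↔ ∀ n, v n = ENNReal.ofReal (potentialDrop Q c n) + v (n + 1) := by
  obtain ⟨w, hw, rfl⟩ : ∃ w : ℕ → ℝ, (∀ n, 0 ≤ w n) ∧ v = fun n => ENNReal.ofReal (w n) :=
    ⟨fun n => (v n).toReal, fun _ => ENNReal.toReal_nonneg,
      funext fun n => (ENNReal.ofReal_toReal (hv n)).symm⟩
  have hdrop := potentialDrop_nonneg hQ hup hc
  simp_rw [cQ_add_tsum_jumpMatrix_eq_ofReal_iff hQ hup hc hw, row_eq_iff_forall_sub_succ_eq hQ hup,
    ← ENNReal.ofReal_add (hdrop _) (hw _),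
    ENNReal.ofReal_eq_ofReal_iff (hw _) (add_nonneg (hdrop _) (hw _)), sub_eq_iff_eq_add]

noncomputable def potentialTail (Q : ℕ → ℕ → ℝ) (c : ℕ → ℝ) (i : ℕ) : ℝ≥0∞ :=
  ∑' n, ENNReal.ofReal (potentialDrop Q c (i + n))

lemma potentialTail_eq_add (Q : ℕ → ℕ → ℝ) (c : ℕ → ℝ) (n : ℕ) :
    potentialTail Q c n = ENNReal.ofReal (potentialDrop Q c n) + potentialTail Q c (n + 1) :=
  tsum_add_eq_add_tsum_succ (fun m => ENNReal.ofReal (potentialDrop Q c m)) n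

lemma potentialTail_ne_top_iff (Q : ℕ → ℕ → ℝ) (c : ℕ → ℝ) (n : ℕ) :
    potentialTail Q c n ≠ ⊤ ↔ potentialTail Q c 0 ≠ ⊤ :=
  ne_top_iff_of_eq_add_succ (fun _ => ENNReal.ofReal_ne_top) (potentialTail_eq_add Q c) n

lemma potentialTail_eq_tsum (hQ : IsQMatrix Q) (hup : QUpwardSkipFree Q) (hc : ∀ i, 0 ≤ c i)
    (i : ℕ) : potentialTail Q c i = ∑' m : {m : ℕ // i ≤ m}, ∑ k ∈ range (m.1 + 1),
      ENNReal.ofReal (Ftilde Q k m.1 * c k / Q k (k + 1)) := by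
  rw [tsum_subtype_le_eq_tsum_add (fun m => ∑ k ∈ range (m + 1),
    ENNReal.ofReal (Ftilde Q k m * c k / Q k (k + 1)))]
  simp_rw [potentialTail, ofReal_potentialDrop hQ hup hc]

lemma ctPotential_le_potentialTail (hQ : IsQMatrix Q) (hup : QUpwardSkipFree Q)
    (hc : ∀ i, 0 ≤ c i) (hT : ∀ n, potentialTail Q c n ≠ ⊤) (n : ℕ) :
    ctPotential Q c n ≤ potentialTail Q c n := by
  rw [ctPotential_eq_kernelPotential]
  exact kernelPotential_le _ (fun m => ((fixedPoint_iff_eq_potentialDrop_add hQ hup hc hT).2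
    (potentialTail_eq_add Q c) m).le) n

lemma potentialTail_le_ctPotential (hQ : IsQMatrix Q) (hup : QUpwardSkipFree Q)
    (hc : ∀ i, 0 ≤ c i) (hψ : ∀ n, ctPotential Q c n ≠ ⊤) (n : ℕ) :
    potentialTail Q c n ≤ ctPotential Q c n := by
  rw [ctPotential_eq_kernelPotential] at hψ ⊢
  exact tsum_add_le_of_eq_add_succ ((fixedPoint_iff_eq_potentialDrop_add hQ hup hc hψ).1
    fun m => (kernelPotential_eq _ _ m).symm) n

lemma ctPotential_ne_top_of_irreducible (hirr : QIrreducible Q) {a : ℕ}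
    (ha : ctPotential Q c a ≠ ⊤) (b : ℕ) : ctPotential Q c b ≠ ⊤ := by
  rw [ctPotential_eq_kernelPotential] at ha ⊢
  exact kernelPotential_ne_top_of_matPow_pos _ (hirr a b).choose_spec ha

end Potential

theorem ct_potential_of_upward_skip_free
    (Q : ℕ → ℕ → ℝ) (hQ : IsQMatrix Q) (hirr : QIrreducible Q)
    (hup : QUpwardSkipFree Q)
    (c : ℕ → ℝ) (hc : ∀ i, 0 ≤ c i) :
    (∀ i : ℕ, ctPotential Q c i =
        ∑' m : {m : ℕ // i ≤ m}, ∑ k ∈ Finset.range (m.1 + 1),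
          ENNReal.ofReal (Ftilde Q k m.1 * c k / Q k (k + 1))) ∧
    ((∀ i : ℕ, ctPotential Q c i < ∞) ↔ ctPotential Q c 0 < ∞) := by
  refine ⟨fun i => ?_, fun h => h 0, fun h i =>
    (ctPotential_ne_top_of_irreducible hirr h.ne i).lt_top⟩
  rw [← potentialTail_eq_tsum hQ hup hc]
  by_cases hψ : ∀ n, ctPotential Q c n ≠ ⊤
  · have hT_le := potentialTail_le_ctPotential hQ hup hc hψ
    exact le_antisymm (ctPotential_le_potentialTail hQ hup hc
      (fun n => ne_top_of_le_ne_top (hψ n) (hT_le n)) i) (hT_le i)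
  · have hψ_top : ∀ n, ctPotential Q c n = ⊤ := fun n => by
      by_contra hn
      exact hψ (ctPotential_ne_top_of_irreducible hirr hn)
    have hT_top : potentialTail Q c i = ⊤ := by
      by_contra hTi
      have hT n := (potentialTail_ne_top_iff Q c n).2 ((potentialTail_ne_top_iff Q c i).1 hTi)
      exact hψ fun n => ne_top_of_le_ne_top (hT n) (ctPotential_le_potentialTail hQ hup hc hT n)
    rw [hψ_top, hT_top]
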